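/- arXiv:2512.01488 — 2 statements merged into one kernel-verified Lean document; each statement's English description precedes it below -/
import Mathlib

section
/- Let μ > 1/4 and C > 0. Let x : [1, ∞) → ℂ be twice continuously differentiable, and define y(t) = t² x''(t) + 3t x'(t) + 4μ x(t). Assume that for all t ≥ 1: |x(t)| ≤ C/t, |x'(t)| ≤ C/t², and |y(t)| ≤ C/t². Then for every T ≥ 1, |∫₁ᵀ x(t) dt| ≤ 6C/(4μ − 1). -/
/-!
With `G t = t² x'(t) + t x(t)` one has `G' = y - (4μ - 1) x`, so by the fundamental theorem of
calculus `(4μ - 1) ∫₁ᵀ x = ∫₁ᵀ y - G T + G 1`. The decay hypotheses give `‖G‖ ≤ 2C` and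
`‖∫₁ᵀ y‖ ≤ ∫₁ᵀ C / t² ≤ C`, hence `(4μ - 1) ‖∫₁ᵀ x‖ ≤ 5C`.
-/

open Set MeasureTheory intervalIntegral

section

variable {E : Type*} [NormedAddCommGroup E] [NormedSpace ℝ E]

theorem aestronglyMeasurable_restrict_of_hasDerivAt [CompleteSpace E] {f f' : ℝ → E}
    {s : Set ℝ} (hs : MeasurableSet s) (hf : ∀ t ∈ s, HasDerivAt f (f' t) t) :
    AEStronglyMeasurable f' (volume.restrict s) :=
  (aestronglyMeasurable_deriv f _).congr <|
    ae_restrict_of_forall_mem hs fun t ht => (hf t ht).deriv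

theorem hasDerivAt_sq_smul_add_smul {x x' : ℝ → E} {x'' : E} {t : ℝ}
    (hx : HasDerivAt x (x' t) t) (hx' : HasDerivAt x' x'' t) :
    HasDerivAt (fun s => s ^ 2 • x' s + s • x s) (t ^ 2 • x'' + (3 * t) • x' t + x t) t := by
  refine (((hasDerivAt_pow 2 t).fun_smul hx').add ((hasDerivAt_id t).fun_smul hx)).congr_deriv ?_
  simp only [id, one_smul, Nat.cast_ofNat]
  module

theorem norm_sq_smul_add_smul_le {u v : E} {C t : ℝ} (ht : 0 < t)
    (hu : ‖u‖ ≤ C / t ^ 2) (hv : ‖v‖ ≤ C / t) : ‖t ^ 2 • u + t • v‖ ≤ 2 * C :=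
  calc ‖t ^ 2 • u + t • v‖ ≤ t ^ 2 * ‖u‖ + t * ‖v‖ := by
        refine (norm_add_le _ _).trans_eq ?_
        rw [norm_smul, norm_smul, Real.norm_of_nonneg (by positivity), Real.norm_of_nonneg ht.le]
    _ ≤ t ^ 2 * (C / t ^ 2) + t * (C / t) := by gcongr
    _ = 2 * C := by field_simp; ring

theorem integral_div_sq {a b : ℝ} (C : ℝ) (h0 : (0 : ℝ) ∉ uIcc a b) :
    ∫ t in a..b, C / t ^ 2 = C * (a⁻¹ - b⁻¹) := by
  have h : ∀ t : ℝ, C / t ^ 2 = C * t ^ (-2 : ℤ) := fun t => by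
    simp [zpow_neg, div_eq_mul_inv]
  simp_rw [h, intervalIntegral.integral_const_mul]
  rw [integral_zpow (Or.inr ⟨by norm_num, h0⟩)]
  congr 1
  norm_num
  ring

theorem intervalIntegrable_div_sq {a b : ℝ} (C : ℝ) (h0 : (0 : ℝ) ∉ uIcc a b) :
    IntervalIntegrable (fun t => C / t ^ 2) volume a b :=
  ContinuousOn.intervalIntegrable <| continuousOn_const.div (continuousOn_pow 2) fun _ ht =>
    pow_ne_zero 2 (ne_of_mem_of_not_mem ht h0)

theorem norm_integral_le_of_norm_le_div_sq {f : ℝ → E} {a b C : ℝ} (ha : 0 < a) (hab : a ≤ b)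
    (hf : ∀ t ∈ Ioc a b, ‖f t‖ ≤ C / t ^ 2) : ‖∫ t in a..b, f t‖ ≤ C * (a⁻¹ - b⁻¹) := by
  have h0 : (0 : ℝ) ∉ uIcc a b := by rw [uIcc_of_le hab]; exact fun h => ha.not_ge h.1
  rw [← integral_div_sq C h0]
  exact norm_integral_le_of_norm_le hab (ae_of_all _ hf) (intervalIntegrable_div_sq C h0)

theorem IntervalIntegrable.of_hasDerivAt_sub_smul [CompleteSpace E] {G x y : ℝ → E} {g : ℝ → ℝ}
    {a b c : ℝ} (hG : ∀ t ∈ uIcc a b, HasDerivAt G (y t - c • x t) t)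
    (hx : IntervalIntegrable x volume a b) (hg : IntervalIntegrable g volume a b)
    (hy : ∀ t ∈ uIoc a b, ‖y t‖ ≤ g t) : IntervalIntegrable y volume a b := by
  refine hg.mono_fun' ?_ (ae_restrict_of_forall_mem measurableSet_uIoc hy)
  have hG' := (aestronglyMeasurable_restrict_of_hasDerivAt measurableSet_uIcc hG).mono_set
    uIoc_subset_uIcc
  exact (hG'.add (hx.def'.aestronglyMeasurable.const_smul c)).congr <|
    ae_of_all _ fun t => sub_add_cancel (y t) _

theorem mul_norm_integral_le_of_hasDerivAt [CompleteSpace E] {G x y : ℝ → E} {a b c : ℝ}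
    (hc : 0 ≤ c) (hG : ∀ t ∈ uIcc a b, HasDerivAt G (y t - c • x t) t)
    (hx : IntervalIntegrable x volume a b) (hy : IntervalIntegrable y volume a b) :
    c * ‖∫ t in a..b, x t‖ ≤ ‖∫ t in a..b, y t‖ + (‖G b‖ + ‖G a‖) := by
  have hcx : IntervalIntegrable (fun t => c • x t) volume a b := hx.smul c
  have hFTC := integral_eq_sub_of_hasDerivAt hG (hy.sub hcx)
  rw [intervalIntegral.integral_sub hy hcx, intervalIntegral.integral_smul] at hFTC
  calc c * ‖∫ t in a..b, x t‖ = ‖(∫ t in a..b, y t) - (G b - G a)‖ := by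
        rw [← hFTC, sub_sub_cancel, norm_smul, Real.norm_of_nonneg hc]
    _ ≤ ‖∫ t in a..b, y t‖ + (‖G b‖ + ‖G a‖) :=
        (norm_sub_le _ _).trans (by gcongr; exact norm_sub_le _ _)

end

theorem averaged_correlation_bound_general (μ C : ℝ) (hμ : 1/4 < μ)
    (x x' x'' : ℝ → ℂ)
    (hx : ∀ t : ℝ, 1 ≤ t → HasDerivAt x (x' t) t)
    (hx' : ∀ t : ℝ, 1 ≤ t → HasDerivAt x' (x'' t) t)
    (y : ℝ → ℂ)
    (hy : ∀ t : ℝ, y t = (t:ℂ)^2 * x'' t + 3 * (t:ℂ) * x' t + 4 * (μ:ℂ) * x t)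
    (hxb : ∀ t : ℝ, 1 ≤ t → ‖x t‖ ≤ C / t)
    (hx'b : ∀ t : ℝ, 1 ≤ t → ‖x' t‖ ≤ C / t^2)
    (hyb : ∀ t : ℝ, 1 ≤ t → ‖y t‖ ≤ C / t^2) :
    ∀ T : ℝ, 1 ≤ T → ‖∫ t in (1:ℝ)..T, x t‖ ≤ 6 * C / (4 * μ - 1) := by
  intro T hT
  have hC : 0 ≤ C := (norm_nonneg _).trans (by simpa using hxb 1 le_rfl)
  have hI : ∀ t ∈ uIcc 1 T, 1 ≤ t := fun t ht => (uIcc_of_le hT ▸ ht).1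
  have hG : ∀ t ∈ uIcc 1 T, HasDerivAt (fun s : ℝ => s ^ 2 • x' s + s • x s)
      (y t - (4 * μ - 1) • x t) t := by
    intro t ht
    refine (hasDerivAt_sq_smul_add_smul (hx t (hI t ht)) (hx' t (hI t ht))).congr_deriv ?_
    rw [hy t]
    simp only [Complex.real_smul]
    push_cast
    ring
  have hxi : IntervalIntegrable x volume 1 T :=
    ContinuousOn.intervalIntegrable fun t ht => (hx t (hI t ht)).continuousAt.continuousWithinAt
  have hyi : IntervalIntegrable y volume 1 T :=
    .of_hasDerivAt_sub_smul hG hxi (intervalIntegrable_div_sq C fun h => zero_lt_one.not_ge (hI 0 h))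
      fun t ht => hyb t (hI t (uIoc_subset_uIcc ht))
  have hyI : ‖∫ t in (1:ℝ)..T, y t‖ ≤ C * (1⁻¹ - T⁻¹) :=
    norm_integral_le_of_norm_le_div_sq one_pos hT fun t ht => hyb t ht.1.le
  have hGb : ∀ t, 1 ≤ t → ‖t ^ 2 • x' t + t • x t‖ ≤ 2 * C := fun t ht =>
    norm_sq_smul_add_smul_le (one_pos.trans_le ht) (hx'b t ht) (hxb t ht)
  have key := mul_norm_integral_le_of_hasDerivAt (by linarith) hG hxi hyi
  have : 0 ≤ C * T⁻¹ := by positivity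
  rw [le_div_iff₀ (by linarith)]
  nlinarith [hGb T hT, hGb 1 le_rfl]

theorem averaged_correlation_bound (μ C : ℝ) (hμ : 1/4 < μ) (hC : 0 < C)
    (x x' x'' : ℝ → ℂ)
    (hx : ∀ t : ℝ, 1 ≤ t → HasDerivAt x (x' t) t)
    (hx' : ∀ t : ℝ, 1 ≤ t → HasDerivAt x' (x'' t) t)
    (hx'' : ContinuousOn x'' (Set.Ici 1))
    (y : ℝ → ℂ)
    (hy : ∀ t : ℝ, y t = (t:ℂ)^2 * x'' t + 3 * (t:ℂ) * x' t + 4 * (μ:ℂ) * x t)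
    (hxb : ∀ t : ℝ, 1 ≤ t → ‖x t‖ ≤ C / t)
    (hx'b : ∀ t : ℝ, 1 ≤ t → ‖x' t‖ ≤ C / t^2)
    (hyb : ∀ t : ℝ, 1 ≤ t → ‖y t‖ ≤ C / t^2) :
    ∀ T : ℝ, 1 ≤ T → ‖∫ t in (1:ℝ)..T, x t‖ ≤ 6 * C / (4 * μ - 1) :=
  averaged_correlation_bound_general μ C hμ x x' x'' hx hx' y hy hxb hx'b hyb
end

section
/- Let σ be a finite positive Borel measure on ℝ, let ξ ∈ ℝ and ε > 0, and set T = 1/ε. Then σ((ξ − ε, ξ + ε)) ≤ 4ε² · ∫_ℝ |∫₀ᵀ e^{i(λ−ξ)t} dt|² dσ(λ). -/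
open MeasureTheory

/-! For `|λ - ξ| < ε = 1/T` the phase `(λ - ξ) t` stays in `[-1, 1]` on `[0, T]`, where the
cosine is at least `1/2`; so the real part of the oscillatory integral, hence its modulus, is at
least `T/2 = 1/(2ε)`. The weight `4ε² |∫₀ᵀ e^{i(λ-ξ)t} dt|²` is therefore at least `1` on the
window, and Markov's inequality finishes the proof. -/

lemma exp_I_mul_ofReal_mul_ofReal (a t : ℝ) :
    Complex.exp (Complex.I * a * t) = Complex.exp (((a * t : ℝ) : ℂ) * Complex.I) := by
  push_cast
  ring_nf

lemma norm_intervalIntegral_exp_I_mul_le (a T : ℝ) :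
    ‖∫ t in (0:ℝ)..T, Complex.exp (Complex.I * a * t)‖ ≤ |T| := by
  simpa using intervalIntegral.norm_integral_le_of_norm_le_const (a := 0) (b := T) (C := 1)
    fun t _ => by rw [exp_I_mul_ofReal_mul_ofReal, Complex.norm_exp_ofReal_mul_I]

lemma re_intervalIntegral_exp_I_mul (a u v : ℝ) :
    (∫ t in u..v, Complex.exp (Complex.I * a * t)).re = ∫ t in u..v, Real.cos (a * t) := by
  have hint : IntervalIntegrable (fun t : ℝ => Complex.exp (Complex.I * a * t)) volume u v :=
    (by fun_prop : Continuous fun t : ℝ => Complex.exp (Complex.I * a * t)).intervalIntegrable _ _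
  rw [← RCLike.re_to_complex, ← intervalIntegral.intervalIntegral_re hint]
  simp only [RCLike.re_to_complex, exp_I_mul_ofReal_mul_ofReal, Complex.exp_ofReal_mul_I_re]

lemma one_half_le_cos_of_abs_le_one {x : ℝ} (hx : |x| ≤ 1) : 1 / 2 ≤ Real.cos x := by
  have : x ^ 2 ≤ 1 := by nlinarith [sq_abs x, abs_nonneg x]
  linarith [Real.one_sub_sq_div_two_le_cos (x := x)]

lemma half_le_norm_intervalIntegral_exp_I_mul {a T : ℝ} (hT : 0 ≤ T) (ha : |a| * T ≤ 1) :
    T / 2 ≤ ‖∫ t in (0:ℝ)..T, Complex.exp (Complex.I * a * t)‖ := by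
  have hcos : ∀ t ∈ Set.Icc 0 T, 1 / 2 ≤ Real.cos (a * t) := fun t ht => by
    refine one_half_le_cos_of_abs_le_one ?_
    rw [abs_mul, abs_of_nonneg ht.1]
    exact (mul_le_mul_of_nonneg_left ht.2 (abs_nonneg a)).trans ha
  calc T / 2 = ∫ _ in (0:ℝ)..T, (1 / 2 : ℝ) := by simp [div_eq_mul_inv]
    _ ≤ ∫ t in (0:ℝ)..T, Real.cos (a * t) :=
        intervalIntegral.integral_mono_on hT intervalIntegrable_const
          ((by fun_prop : Continuous fun t => Real.cos (a * t)).intervalIntegrable _ _) hcos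
    _ = (∫ t in (0:ℝ)..T, Complex.exp (Complex.I * a * t)).re :=
        (re_intervalIntegral_exp_I_mul a 0 T).symm
    _ ≤ ‖∫ t in (0:ℝ)..T, Complex.exp (Complex.I * a * t)‖ := Complex.re_le_norm _

lemma integrable_norm_intervalIntegral_exp_I_mul_sq (σ : Measure ℝ) [IsFiniteMeasure σ]
    (ξ T : ℝ) :
    Integrable (fun lam : ℝ =>
      ‖∫ t in (0:ℝ)..T, Complex.exp (Complex.I * (lam - ξ) * t)‖ ^ 2) σ := by
  have hcont : Continuous fun lam : ℝ =>
      ∫ t in (0:ℝ)..T, Complex.exp (Complex.I * (lam - ξ) * t) :=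
    intervalIntegral.continuous_parametric_intervalIntegral_of_continuous' (by fun_prop) 0 T
  refine Integrable.of_bound (hcont.norm.pow 2).aestronglyMeasurable (|T| ^ 2)
    (ae_of_all _ fun lam => ?_)
  have := norm_intervalIntegral_exp_I_mul_le (lam - ξ) T
  push_cast at this
  rw [Real.norm_of_nonneg (by positivity)]
  gcongr

theorem spectral_localization (σ : Measure ℝ) [IsFiniteMeasure σ]
    (ξ ε : ℝ) (hε : 0 < ε) (T : ℝ) (hT : T = 1 / ε) :
    (σ (Set.Ioo (ξ - ε) (ξ + ε))).toReal ≤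
      4 * ε ^ 2 *
        ∫ lam : ℝ, ‖∫ t in (0:ℝ)..T, Complex.exp (Complex.I * (lam - ξ) * t)‖ ^ 2 ∂σ := by
  set F : ℝ → ℝ := fun lam => ‖∫ t in (0:ℝ)..T, Complex.exp (Complex.I * (lam - ξ) * t)‖ ^ 2
  have hT_pos : 0 < T := by rw [hT]; positivity
  have hF_ge : Set.Ioo (ξ - ε) (ξ + ε) ⊆ {lam | (T / 2) ^ 2 ≤ F lam} := fun lam hlam => by
    have hphase : |lam - ξ| * T ≤ 1 := by
      rw [hT, mul_one_div, div_le_one hε]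
      exact (abs_sub_lt_iff.2 ⟨by linarith [hlam.2], by linarith [hlam.1]⟩).le
    have := half_le_norm_intervalIntegral_exp_I_mul hT_pos.le hphase
    push_cast at this
    exact pow_le_pow_left₀ (by positivity) this 2
  have hmarkov := mul_meas_ge_le_integral_of_nonneg (ae_of_all _ fun _ => sq_nonneg _)
    (integrable_norm_intervalIntegral_exp_I_mul_sq σ ξ T) ((T / 2) ^ 2)
  calc (σ (Set.Ioo (ξ - ε) (ξ + ε))).toReal
      = 4 * ε ^ 2 * ((T / 2) ^ 2 * σ.real (Set.Ioo (ξ - ε) (ξ + ε))) := by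
        rw [hT, measureReal_def]; field_simp; norm_num
    _ ≤ 4 * ε ^ 2 * ((T / 2) ^ 2 * σ.real {lam | (T / 2) ^ 2 ≤ F lam}) := by
        gcongr
        exact measure_ne_top _ _
    _ ≤ 4 * ε ^ 2 * ∫ lam, F lam ∂σ := by gcongr
end
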